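/- There exist δ' ∈ (0, 3^{3/2}), η > 0 and C > 0 with the following property. Let B ⊂ ℂ be the polygonal contour consisting of the three segments B₁ = { 3^{3/2} − δ' + iy : y ∈ [0, η] }, B₂ = { x + iη : x ∈ [3^{3/2} − δ', 3^{3/2} + δ'] } and B₃ = { 3^{3/2} + δ' + iy : y ∈ [0, η] }. Then for every r ∈ B, Re( (r^{2/3} − 3)²/8 − (2/3) r i ) ≥ C, where r^{2/3} = exp((2/3) Log r) is defined using the principal branch of the logarithm. -/

import Mathlib

/-!
Take `δ' = 1`, `η = 1/100`, `C = 1/1000` and write `w = r^{2/3}`. Since `‖w - 3‖ ≥ |‖w‖ - 3|`,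
`Re((w - 3)²) ≥ (‖w‖ - 3)² - 2 (Im w)²`, and near the positive real axis `Im w` is tiny:
Jordan's inequality bounds `arg r` by `(π/2) |Im r| / ‖r‖`, so `|Im w| ≤ (π/3) |Im r|`.
On the horizontal side the term `(2/3) Im r = (2/3) η` dominates; on the vertical sides
`‖r‖` stays away from `3^{3/2}`, so `‖w‖ = ‖r‖^{2/3}` stays away from `3`.
-/

/-- The polygonal contour `B = B₁ ∪ B₂ ∪ B₃` joining `3^{3/2} − δ'` to `3^{3/2} + δ'`
through the upper half-plane at height `η`. -/
def Bcontour (δ' η : ℝ) : Set ℂ :=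
  ((fun y : ℝ => (((3:ℝ) ^ ((3:ℝ)/2) - δ' : ℝ) : ℂ) + (y : ℂ) * Complex.I) '' Set.Icc 0 η) ∪
  ((fun x : ℝ => (x : ℂ) + (η : ℂ) * Complex.I) ''
      Set.Icc ((3:ℝ) ^ ((3:ℝ)/2) - δ') ((3:ℝ) ^ ((3:ℝ)/2) + δ')) ∪
  ((fun y : ℝ => (((3:ℝ) ^ ((3:ℝ)/2) + δ' : ℝ) : ℂ) + (y : ℂ) * Complex.I) '' Set.Icc 0 η)

open Complex Real

namespace Complex

theorem abs_arg_le_pi_div_two_mul_abs_im_div_norm {r : ℂ} (hr : 0 ≤ r.re) :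
    |arg r| ≤ π / 2 * (|r.im| / ‖r‖) := by
  have jordan := mul_abs_le_abs_sin (abs_arg_le_pi_div_two_iff.mpr hr)
  rw [sin_arg, abs_div, abs_norm] at jordan
  rw [← div_le_iff₀' (by positivity), div_div_eq_mul_div, mul_comm]
  simpa [div_eq_inv_mul, mul_assoc] using jordan

theorem abs_im_cpow_ofReal_le {r : ℂ} {s : ℝ} (hr : 0 ≤ r.re) (hr₁ : 1 ≤ ‖r‖) (hs₀ : 0 ≤ s)
    (hs₁ : s ≤ 1) : |(r ^ (s : ℂ)).im| ≤ s * (π / 2) * |r.im| := by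
  have hr₀ : 0 < ‖r‖ := one_pos.trans_le hr₁
  calc |(r ^ (s : ℂ)).im| = ‖r‖ ^ s * |Real.sin (arg r * s)| := by
        rw [cpow_ofReal_im, abs_mul, abs_of_nonneg (by positivity)]
    _ ≤ ‖r‖ * (|arg r| * s) := by
        gcongr
        · exact rpow_le_self_of_one_le hr₁ hs₁
        · simpa [abs_mul, abs_of_nonneg hs₀] using abs_sin_le_abs (x := arg r * s)
    _ ≤ ‖r‖ * (π / 2 * (|r.im| / ‖r‖) * s) := by
        gcongr; exact abs_arg_le_pi_div_two_mul_abs_im_div_norm hr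
    _ = s * (π / 2) * |r.im| := by field_simp

theorem sq_norm_sub_sub_two_mul_im_sq_le_re_sq (w : ℂ) {c : ℝ} (hc : 0 ≤ c) :
    (‖w‖ - c) ^ 2 - 2 * w.im ^ 2 ≤ ((w - c) ^ 2).re := by
  have h : (‖w‖ - c) ^ 2 ≤ ‖w - c‖ ^ 2 := by
    simpa [abs_of_nonneg hc] using sq_le_sq' (abs_le.mp (abs_norm_sub_norm_le w c)).1
      (abs_le.mp (abs_norm_sub_norm_le w c)).2
  rw [Complex.sq_norm, normSq_apply] at h
  simp only [sq, mul_re, sub_re, sub_im, ofReal_re, ofReal_im] at h ⊢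
  linarith

end Complex

theorem rpow_two_div_three_le_iff {x c : ℝ} (hx : 0 ≤ x) (hc : 0 ≤ c) :
    x ^ (2 / 3 : ℝ) ≤ c ↔ x ^ 2 ≤ c ^ 3 := by
  rw [show (2 / 3 : ℝ) = 2 * 3⁻¹ by norm_num, rpow_mul hx, rpow_two,
    rpow_inv_le_iff_of_pos (by positivity) hc (by norm_num), rpow_ofNat]

theorem le_rpow_two_div_three_iff {x c : ℝ} (hx : 0 ≤ x) (hc : 0 ≤ c) :
    c ≤ x ^ (2 / 3 : ℝ) ↔ c ^ 3 ≤ x ^ 2 := by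
  rw [show (2 / 3 : ℝ) = 2 * 3⁻¹ by norm_num, rpow_mul hx, rpow_two,
    le_rpow_inv_iff_of_pos hc (by positivity) (by norm_num), rpow_ofNat]

noncomputable def contourPhase (r : ℂ) : ℂ := (r ^ ((2:ℂ)/3) - 3) ^ 2 / 8 - (2/3) * r * Complex.I

theorem le_contourPhase_re {r : ℂ} (hr : 0 ≤ r.re) (hr₁ : 1 ≤ ‖r‖) (him : |r.im| ≤ 1 / 100) :
    (‖r‖ ^ (2 / 3 : ℝ) - 3) ^ 2 / 8 - 1 / 10000 + 2 / 3 * r.im ≤ (contourPhase r).re := by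
  set w := r ^ ((2 / 3 : ℝ) : ℂ) with hw
  have hw_im : |w.im| ≤ 1 / 75 := by
    calc |w.im| ≤ 2 / 3 * (π / 2) * |r.im| :=
          abs_im_cpow_ofReal_le hr hr₁ (by norm_num) (by norm_num)
      _ ≤ 2 / 3 * (4 / 2) * (1 / 100) := by gcongr; linarith [pi_lt_four]
      _ = 1 / 75 := by norm_num
  have hre : (contourPhase r).re = ((w - (3 : ℝ)) ^ 2).re / 8 + 2 / 3 * r.im := by
    simp [contourPhase, hw]
  have hsq := sq_norm_sub_sub_two_mul_im_sq_le_re_sq w (c := 3) (by norm_num)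
  rw [norm_cpow_real] at hsq
  nlinarith [abs_le.mp hw_im]

theorem one_div_thousand_le_contourPhase_re {x y : ℝ} (hx : 1 ≤ x) (hy₀ : 0 ≤ y)
    (hy : y ≤ 1 / 100)
    (hside : y = 1 / 100 ∨ x ^ 2 + y ^ 2 ≤ (261 / 100) ^ 3 ∨ (337 / 100) ^ 3 ≤ x ^ 2 + y ^ 2) :
    1 / 1000 ≤ (contourPhase (x + y * I)).re := by
  have hnorm : ‖(x + y * I : ℂ)‖ ^ 2 = x ^ 2 + y ^ 2 := by
    rw [Complex.sq_norm, normSq_add_mul_I]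
  have hre : 1 ≤ (x + y * I : ℂ).re := by simpa using hx
  have hbound := le_contourPhase_re (by linarith) (hre.trans (re_le_norm _))
    (by simpa [abs_of_nonneg hy₀] using hy)
  set ρ := ‖(x + y * I : ℂ)‖ ^ (2 / 3 : ℝ)
  simp only [add_im, ofReal_im, mul_im, ofReal_re, I_re, I_im] at hbound
  rcases hside with rfl | hnear | hfar
  · nlinarith [sq_nonneg (ρ - 3)]
  · have : ρ ≤ 261 / 100 := (rpow_two_div_three_le_iff (norm_nonneg _) (by norm_num)).mpr
      (hnorm ▸ hnear)
    nlinarith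
  · have : 337 / 100 ≤ ρ := (le_rpow_two_div_three_iff (norm_nonneg _) (by norm_num)).mpr
      (hnorm ▸ hfar)
    nlinarith

/-- There exist `δ' ∈ (0, 3^{3/2})`, `η > 0` and `C > 0` such that along the contour `B`,
`Re((r^{2/3} − 3)²/8 − (2/3) r i) ≥ C`, where `r^{2/3}` uses the principal branch. -/
theorem contour_phase_bound :
    ∃ δ' η C : ℝ, 0 < δ' ∧ δ' < (3:ℝ) ^ ((3:ℝ)/2) ∧ 0 < η ∧ 0 < C ∧
      ∀ r ∈ Bcontour δ' η,
        C ≤ ((r ^ ((2:ℂ)/3) - 3) ^ 2 / 8 - (2/3) * r * Complex.I).re := by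
  set a : ℝ := (3:ℝ) ^ ((3:ℝ)/2) with ha
  have ha_sq : a ^ 2 = 27 := by
    rw [ha, ← rpow_natCast, ← rpow_mul (by norm_num)]; norm_num
  have ha_pos : 0 < a := by positivity
  have ha_lo : 519 / 100 ≤ a := by nlinarith
  refine ⟨1, 1 / 100, 1 / 1000, one_pos, by linarith, by norm_num, by norm_num, ?_⟩
  rintro r ((⟨y, ⟨hy₀, hy⟩, rfl⟩ | ⟨x, ⟨hx, -⟩, rfl⟩) | ⟨y, ⟨hy₀, hy⟩, rfl⟩)
  · exact one_div_thousand_le_contourPhase_re (by linarith) hy₀ hy (.inr (.inl (by nlinarith)))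
  · exact one_div_thousand_le_contourPhase_re (by linarith) (by norm_num) le_rfl (.inl rfl)
  · exact one_div_thousand_le_contourPhase_re (by linarith) hy₀ hy (.inr (.inr (by nlinarith)))
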